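/- Let A be an n×n complex matrix satisfying the Crouzeix inequality, and let N be an m×m normal complex matrix (N* N = N N*). Then both Kronecker products N ⊗ A and A ⊗ N satisfy the Crouzeix inequality. -/

import Mathlib

open scoped ComplexInnerProductSpace

/-- The continuous linear map on Euclidean space induced by a square matrix. -/
noncomputable def matCLM {ι : Type} [Fintype ι] [DecidableEq ι] (A : Matrix ι ι ℂ) :
    EuclideanSpace ℂ ι →L[ℂ] EuclideanSpace ℂ ι :=
  Matrix.toEuclideanCLM (𝕜 := ℂ) A

/-- The numerical range of a square complex matrix. -/
def numRange {ι : Type} [Fintype ι] [DecidableEq ι] (A : Matrix ι ι ℂ) : Set ℂ :=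
  {z | ∃ x : EuclideanSpace ℂ ι, ‖x‖ = 1 ∧ z = ⟪x, matCLM A x⟫}

/-- A square complex matrix satisfies the Crouzeix inequality if for every polynomial `p`,
`‖p(A)‖ ≤ 2 * sup_{z ∈ W(A)} |p(z)|`. -/
def CrouzeixIneq {ι : Type} [Fintype ι] [DecidableEq ι] (A : Matrix ι ι ℂ) : Prop :=
  ∀ p : Polynomial ℂ,
    ‖matCLM (Polynomial.aeval A p)‖ ≤ 2 * ⨆ z ∈ numRange A, ‖Polynomial.eval z p‖


/-!
Diagonalise the normal matrix by a unitary, `N = U D U*` with `D = diag μ`. Then `A ⊗ N` is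
unitarily similar to `A ⊗ D`, the block-diagonal matrix with blocks `μᵢ A`. The Crouzeix
inequality survives unitary similarity (which preserves both `‖p(·)‖` and the numerical range),
scaling (`W(μ A) = μ W(A)`), and block-diagonal sums: `p` acts blockwise, the norm of a
block-diagonal matrix is its largest block norm, and the numerical range of each block lies in that
of the sum. Finally `N ⊗ A` is a permutation similarity away from `A ⊗ N`.
-/

open Polynomial Matrix WithLp
open scoped Kronecker ComplexStarModule Matrix.Norms.L2Operator

theorem Matrix.reindex_prodComm_kronecker {R l m n p : Type*} [CommMagma R] (A : Matrix l m R)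
    (B : Matrix n p R) :
    reindex (Equiv.prodComm l n) (Equiv.prodComm m p) (A ⊗ₖ B) = B ⊗ₖ A := by
  ext ⟨i, k⟩ ⟨j, l⟩
  simp [mul_comm]

def Matrix.blockDiagonalStarAlgHom (m o R : Type*) [Fintype m] [DecidableEq m] [Fintype o]
    [DecidableEq o] [CommSemiring R] [StarRing R] :
    (o → Matrix m m R) →⋆ₐ[R] Matrix (m × o) (m × o) R where
  toRingHom := blockDiagonalRingHom m o R
  commutes' c := by
    change blockDiagonal (fun _ => diagonal fun _ => c) = diagonal fun _ => c
    exact blockDiagonal_diagonal _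
  map_star' B := (blockDiagonal_conjTranspose B).symm

noncomputable def EuclideanSpace.blockEmbedding {𝕜 ι o : Type*} [RCLike 𝕜] [Fintype ι]
    [Fintype o] [DecidableEq o] (i : o) : EuclideanSpace 𝕜 ι →ₗᵢ[𝕜] EuclideanSpace 𝕜 (ι × o) where
  toFun x := toLp 2 fun q => if q.2 = i then x q.1 else 0
  map_add' x y := by ext q; by_cases h : q.2 = i <;> simp [h]
  map_smul' c x := by ext q; by_cases h : q.2 = i <;> simp [h]
  norm_map' x := by
    simp [EuclideanSpace.norm_eq, Fintype.sum_prod_type, apply_ite (fun z : 𝕜 => ‖z‖ ^ 2)]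

theorem LinearIsometryEquiv.norm_conjStarAlgEquiv {𝕜 E F : Type*} [RCLike 𝕜]
    [NormedAddCommGroup E] [InnerProductSpace 𝕜 E] [CompleteSpace E] [NormedAddCommGroup F]
    [InnerProductSpace 𝕜 F] [CompleteSpace F] (f : E ≃ₗᵢ[𝕜] F) (T : E →L[𝕜] E) :
    ‖f.conjStarAlgEquiv T‖ = ‖T‖ := by
  rw [conjStarAlgEquiv_apply, ContinuousLinearMap.opNorm_linearIsometryEquiv_comp,
    ContinuousLinearMap.opNorm_comp_linearIsometryEquiv]

theorem biSup_norm_nonneg {β E : Type*} [SeminormedAddGroup E] (T : Set β) (g : β → E) :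
    0 ≤ ⨆ w ∈ T, ‖g w‖ :=
  Real.iSup_nonneg fun _ => Real.iSup_nonneg fun _ => norm_nonneg _

section BiSup

variable {α β E : Type*} [TopologicalSpace β] [SeminormedAddGroup E]

theorem norm_le_biSup_norm {T : Set β} (hT : IsCompact T) {g : β → E} (hg : Continuous g)
    {w : β} (hw : w ∈ T) : ‖g w‖ ≤ ⨆ z ∈ T, ‖g z‖ := by
  obtain ⟨C, hC⟩ := (hT.image (continuous_norm.comp hg)).bddAbove
  refine le_ciSup₂ (f := fun z (_ : z ∈ T) => ‖g z‖) ⟨C, ?_⟩ w hw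
  rw [mem_upperBounds]
  simp only [Set.mem_iUnion, Set.mem_range]
  rintro _ ⟨z, hz, rfl⟩
  exact hC ⟨z, hz, rfl⟩

theorem biSup_norm_le_biSup_norm {S : Set α} {T : Set β} (hT : IsCompact T) {f : α → E}
    {g : β → E} (hg : Continuous g) (h : ∀ z ∈ S, ∃ w ∈ T, f z = g w) :
    ⨆ z ∈ S, ‖f z‖ ≤ ⨆ w ∈ T, ‖g w‖ := by
  have hnonneg := biSup_norm_nonneg T g
  refine Real.iSup_le (fun z => Real.iSup_le (fun hz => ?_) hnonneg) hnonneg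
  obtain ⟨w, hw, hzw⟩ := h z hz
  rw [hzw]
  exact norm_le_biSup_norm hT hg hw

end BiSup

theorem DirectSum.IsInternal.exists_orthonormalBasis_subordinate {𝕜 E ι : Type*} [RCLike 𝕜]
    [NormedAddCommGroup E] [InnerProductSpace 𝕜 E] [FiniteDimensional 𝕜 E] [DecidableEq ι]
    {n : ℕ} (hn : Module.finrank 𝕜 E = n) {V : ι → Submodule 𝕜 E} (hV : DirectSum.IsInternal V)
    (hV' : OrthogonalFamily 𝕜 (fun i => V i) fun i => (V i).subtypeₗᵢ) :
    ∃ b : OrthonormalBasis (Fin n) 𝕜 E, ∀ a, ∃ i, b a ∈ V i := by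
  obtain ⟨hind, hsup⟩ := (DirectSum.isInternal_submodule_iff_iSupIndep_and_iSup_eq_top V).mp hV
  -- `subordinateOrthonormalBasis` needs a finite index set: drop the zero summands.
  let ι₀ := {i // V i ≠ ⊥}
  have : Fintype ι₀ := hind.fintypeNeBotOfFiniteDimensional
  have hsup₀ : ⨆ i : ι₀, V i = ⊤ := by
    rw [← hsup]
    refine le_antisymm (iSup_le fun i => le_iSup V i.1) (iSup_le fun i => ?_)
    by_cases h : V i = ⊥
    · rw [h]; exact bot_le
    · exact le_iSup_of_le (⟨i, h⟩ : ι₀) le_rfl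
  have hV₀ : DirectSum.IsInternal fun i : ι₀ => V i :=
    (DirectSum.isInternal_submodule_iff_iSupIndep_and_iSup_eq_top _).mpr
      ⟨hind.comp Subtype.val_injective, hsup₀⟩
  have hV₀' := hV'.comp (Subtype.val_injective : Function.Injective (Subtype.val : ι₀ → ι))
  exact ⟨hV₀.subordinateOrthonormalBasis hn hV₀', fun a =>
    ⟨_, hV₀.subordinateOrthonormalBasis_subordinate hn a hV₀'⟩⟩

theorem LinearMap.IsSymmetric.exists_orthonormalBasis_eigenvectors_of_commute {𝕜 E : Type*}
    [RCLike 𝕜] [NormedAddCommGroup E] [InnerProductSpace 𝕜 E] [FiniteDimensional 𝕜 E] {n : ℕ}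
    (hn : Module.finrank 𝕜 E = n) {S T : E →ₗ[𝕜] E} (hS : S.IsSymmetric) (hT : T.IsSymmetric)
    (hST : Commute S T) :
    ∃ (b : OrthonormalBasis (Fin n) 𝕜 E) (α β : Fin n → 𝕜),
      ∀ a, S (b a) = α a • b a ∧ T (b a) = β a • b a := by
  classical
  obtain ⟨b, hb⟩ := (hS.directSum_isInternal_of_commute hT hST).exists_orthonormalBasis_subordinate
    hn (hS.orthogonalFamily_eigenspace_inf_eigenspace hT)
  choose c hc using hb
  exact ⟨b, fun a => (c a).2, fun a => (c a).1, fun a =>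
    ⟨Module.End.mem_eigenspace_iff.mp (hc a).1, Module.End.mem_eigenspace_iff.mp (hc a).2⟩⟩

theorem IsStarNormal.exists_orthonormalBasis_eigenvectors {E : Type*} [NormedAddCommGroup E]
    [InnerProductSpace ℂ E] [FiniteDimensional ℂ E] {n : ℕ} (hn : Module.finrank ℂ E = n)
    {T : E →L[ℂ] E} (hT : IsStarNormal T) :
    ∃ (b : OrthonormalBasis (Fin n) ℂ E) (μ : Fin n → ℂ), ∀ a, T (b a) = μ a • b a := by
  obtain ⟨b, α, β, hb⟩ := LinearMap.IsSymmetric.exists_orthonormalBasis_eigenvectors_of_commute hn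
    (ℜ T).2.isSymmetric (ℑ T).2.isSymmetric
    ((isStarNormal_iff_commute_realPart_imaginaryPart.mp hT).map
      ContinuousLinearMap.toLinearMapRingHom)
  refine ⟨b, fun a => α a + Complex.I * β a, fun a => ?_⟩
  obtain ⟨hα, hβ⟩ := hb a
  calc T (b a) = (ℜ T : E →L[ℂ] E) (b a) + Complex.I • (ℑ T : E →L[ℂ] E) (b a) := by
        conv_lhs => rw [← realPart_add_I_smul_imaginaryPart T]
        rfl
    _ = _ := by
      rw [← ContinuousLinearMap.coe_coe, hα, ← ContinuousLinearMap.coe_coe, hβ, smul_smul,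
        ← add_smul]

section Matrices

variable {ι κ o : Type} [Fintype ι] [DecidableEq ι] [Fintype κ] [DecidableEq κ]
  [Fintype o] [DecidableEq o]

theorem Matrix.exists_unitary_eq_mul_diagonal_mul_star {N : Matrix ι ι ℂ} (hN : IsStarNormal N) :
    ∃ (U : unitary (Matrix ι ι ℂ)) (μ : ι → ℂ),
      N = (U : Matrix ι ι ℂ) * diagonal μ * star (U : Matrix ι ι ℂ) := by
  have hT : IsStarNormal (matCLM N) := hN.map toEuclideanCLM
  obtain ⟨b₀, μ₀, hb₀⟩ := hT.exists_orthonormalBasis_eigenvectors finrank_euclideanSpace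
  let e := (Fintype.equivFin ι).symm
  let b := b₀.reindex e
  have hb : ∀ j, N *ᵥ b j = μ₀ (e.symm j) • b j := fun j => by
    simpa [b, matCLM] using congrArg ofLp (hb₀ (e.symm j))
  let U : unitary (Matrix ι ι ℂ) := ⟨(EuclideanSpace.basisFun ι ℂ).toBasis.toMatrix b.toBasis,
    (EuclideanSpace.basisFun ι ℂ).toMatrix_orthonormalBasis_mem_unitary b⟩
  refine ⟨U, fun j => μ₀ (e.symm j), ?_⟩
  have hNU : N * U = U * diagonal fun j => μ₀ (e.symm j) := by
    ext i j
    rw [mul_diagonal, mul_apply]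
    simpa [U, Module.Basis.toMatrix_apply, mulVec, dotProduct, mul_comm] using congrFun (hb j) i
  calc N = N * U * star (U : Matrix ι ι ℂ) := by
        rw [mul_assoc, Unitary.mul_star_self_of_mem U.2, mul_one]
    _ = _ := by rw [hNU]

theorem matCLM_aeval (M : Matrix ι ι ℂ) (p : ℂ[X]) : matCLM (aeval M p) = aeval (matCLM M) p :=
  (aeval_algHom_apply (toEuclideanCLM (𝕜 := ℂ) (n := ι)) M p).symm

theorem matCLM_blockDiagonal_blockEmbedding (B : o → Matrix ι ι ℂ) (i : o)
    (x : EuclideanSpace ℂ ι) :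
    matCLM (blockDiagonal B) (EuclideanSpace.blockEmbedding i x) =
      EuclideanSpace.blockEmbedding i (matCLM (B i) x) := by
  ext ⟨k, j⟩
  by_cases h : j = i
  · subst h
    simp [EuclideanSpace.blockEmbedding, matCLM, mulVec, dotProduct, Fintype.sum_prod_type,
      blockDiagonal_apply]
  · simp only [matCLM, EuclideanSpace.blockEmbedding, LinearIsometry.coe_mk, LinearMap.coe_mk,
      AddHom.coe_mk, ofLp_toEuclideanCLM, toEuclideanCLM_toLp, mulVec, dotProduct,
      blockDiagonal_apply, mul_ite, ite_mul, zero_mul, mul_zero, h, ↓reduceIte]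
    exact Finset.sum_eq_zero fun q _ => by grind

theorem isCompact_numRange (M : Matrix ι ι ℂ) : IsCompact (numRange M) := by
  have hW : numRange M = (fun x => ⟪x, matCLM M x⟫) '' Metric.sphere 0 1 := by
    ext z; simp [numRange, eq_comm]
  rw [hW]
  exact (isCompact_sphere 0 1).image (by fun_prop)

theorem numRange_subset_of_intertwine (J : EuclideanSpace ℂ ι →ₗᵢ[ℂ] EuclideanSpace ℂ κ)
    {M : Matrix ι ι ℂ} {M' : Matrix κ κ ℂ} (hJ : ∀ x, matCLM M' (J x) = J (matCLM M x)) :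
    numRange M ⊆ numRange M' := by
  rintro _ ⟨x, hx, rfl⟩
  exact ⟨J x, by rw [J.norm_map, hx], by rw [hJ, J.inner_map_map]⟩

theorem numRange_eq_of_conj (f : EuclideanSpace ℂ ι ≃ₗᵢ[ℂ] EuclideanSpace ℂ κ)
    {M : Matrix ι ι ℂ} {M' : Matrix κ κ ℂ} (hM : matCLM M' = f.conjStarAlgEquiv (matCLM M)) :
    numRange M' = numRange M :=
  (numRange_subset_of_intertwine f.symm.toLinearIsometry fun y => by
    rw [hM, LinearIsometryEquiv.conjStarAlgEquiv_apply_apply]; simp).antisymm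
    (numRange_subset_of_intertwine f.toLinearIsometry fun x => by simp [hM])

theorem smul_mem_numRange {M : Matrix ι ι ℂ} {z : ℂ} (hz : z ∈ numRange M) (c : ℂ) :
    c * z ∈ numRange (c • M) := by
  obtain ⟨x, hx, rfl⟩ := hz
  exact ⟨x, hx, by simp [matCLM]⟩

theorem numRange_subset_numRange_blockDiagonal (B : o → Matrix ι ι ℂ) (i : o) :
    numRange (B i) ⊆ numRange (blockDiagonal B) :=
  numRange_subset_of_intertwine (EuclideanSpace.blockEmbedding i)
    (matCLM_blockDiagonal_blockEmbedding B i)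

namespace CrouzeixIneq

theorem of_conj (f : EuclideanSpace ℂ ι ≃ₗᵢ[ℂ] EuclideanSpace ℂ κ) {M : Matrix ι ι ℂ}
    {M' : Matrix κ κ ℂ} (hM : matCLM M' = f.conjStarAlgEquiv (matCLM M)) (h : CrouzeixIneq M) :
    CrouzeixIneq M' := by
  intro p
  rw [numRange_eq_of_conj f hM, matCLM_aeval, hM, aeval_algHom_apply,
    LinearIsometryEquiv.norm_conjStarAlgEquiv, ← matCLM_aeval]
  exact h p

theorem conj_unitary (U : unitary (Matrix ι ι ℂ)) {M : Matrix ι ι ℂ} (h : CrouzeixIneq M) :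
    CrouzeixIneq ((U : Matrix ι ι ℂ) * M * star (U : Matrix ι ι ℂ)) := by
  let u : unitary (EuclideanSpace ℂ ι →L[ℂ] EuclideanSpace ℂ ι) :=
    ⟨matCLM U, Unitary.map_mem toEuclideanCLM U.2⟩
  refine h.of_conj (Unitary.linearIsometryEquiv u) ?_
  rw [Unitary.conjStarAlgEquiv_unitaryLinearIsometryEquiv, Unitary.conjStarAlgAut_apply]
  simp [u, matCLM, map_mul, map_star]

theorem reindex (e : ι ≃ κ) {M : Matrix ι ι ℂ} (h : CrouzeixIneq M) :
    CrouzeixIneq (Matrix.reindex e e M) := by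
  refine h.of_conj (LinearIsometryEquiv.piLpCongrLeft 2 ℂ ℂ e) ?_
  ext x i
  simp only [matCLM, reindex_apply, ofLp_toEuclideanCLM, mulVec, dotProduct, submatrix_apply,
    LinearIsometryEquiv.conjStarAlgEquiv_apply_apply, LinearIsometryEquiv.piLpCongrLeft_symm,
    LinearIsometryEquiv.piLpCongrLeft_apply, Equiv.piCongrLeft'_apply, Equiv.symm_symm]
  exact Fintype.sum_equiv e.symm _ _ (by simp)

theorem smul (c : ℂ) {M : Matrix ι ι ℂ} (h : CrouzeixIneq M) : CrouzeixIneq (c • M) := by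
  intro p
  have hp : aeval (c • M) p = aeval M (p.comp (C c * X)) := by
    rw [aeval_comp, map_mul, aeval_C, aeval_X, Algebra.smul_def]
  rw [hp]
  refine (h _).trans (mul_le_mul_of_nonneg_left ?_ zero_le_two)
  refine biSup_norm_le_biSup_norm (isCompact_numRange _) p.continuous fun z hz => ?_
  exact ⟨c * z, smul_mem_numRange hz c, by simp⟩

theorem blockDiagonal {B : o → Matrix ι ι ℂ} (h : ∀ i, CrouzeixIneq (B i)) :
    CrouzeixIneq (blockDiagonal B) := by
  intro p
  have hp : aeval (Matrix.blockDiagonal B) p = Matrix.blockDiagonal fun i => aeval (B i) p :=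
    calc aeval (Matrix.blockDiagonal B) p = blockDiagonalStarAlgHom ι o ℂ (aeval B p) :=
          aeval_algHom_apply (blockDiagonalStarAlgHom ι o ℂ) B p
      _ = _ := by rw [aeval_pi]; rfl
  rw [hp]
  -- With the L2 operator norm, `‖matCLM M‖ = ‖M‖` by definition, and star homomorphisms of
  -- C⋆-algebras are contractive.
  refine (NonUnitalStarAlgHom.norm_apply_le (blockDiagonalStarAlgHom ι o ℂ) _).trans ?_
  refine (pi_norm_le_iff_of_nonneg (mul_nonneg zero_le_two (biSup_norm_nonneg _ _))).2
    fun i => (h i p).trans (mul_le_mul_of_nonneg_left ?_ zero_le_two)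
  exact biSup_norm_le_biSup_norm (isCompact_numRange _) p.continuous fun z hz =>
    ⟨z, numRange_subset_numRange_blockDiagonal B i hz, rfl⟩

theorem kronecker_diagonal {A : Matrix ι ι ℂ} (hA : CrouzeixIneq A) (μ : o → ℂ) :
    CrouzeixIneq (A ⊗ₖ diagonal μ) := by
  rw [kroneckerMap_diagonal_right _ mul_zero]
  refine CrouzeixIneq.blockDiagonal fun i => ?_
  convert hA.smul (μ i) using 1
  ext k l
  simp [mul_comm]

theorem kronecker_of_isStarNormal {A : Matrix ι ι ℂ} (hA : CrouzeixIneq A) {N : Matrix κ κ ℂ}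
    (hN : IsStarNormal N) : CrouzeixIneq (A ⊗ₖ N) := by
  obtain ⟨U, μ, rfl⟩ := exists_unitary_eq_mul_diagonal_mul_star hN
  let W : unitary (Matrix (ι × κ) (ι × κ) ℂ) :=
    ⟨1 ⊗ₖ (U : Matrix κ κ ℂ), kronecker_mem_unitary (one_mem _) U.2⟩
  have hW : A ⊗ₖ ((U : Matrix κ κ ℂ) * diagonal μ * star (U : Matrix κ κ ℂ)) =
      (W : Matrix (ι × κ) (ι × κ) ℂ) * (A ⊗ₖ diagonal μ) *
        star (W : Matrix (ι × κ) (ι × κ) ℂ) := by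
    simp only [W, star_eq_conjTranspose, conjTranspose_kronecker, conjTranspose_one,
      ← mul_kronecker_mul, one_mul, mul_one]
  rw [hW]
  exact (hA.kronecker_diagonal μ).conj_unitary W

end CrouzeixIneq

end Matrices

/-- If `A` satisfies the Crouzeix inequality and `N` is normal, then the Kronecker products
`N ⊗ A` and `A ⊗ N` satisfy the Crouzeix inequality. -/
theorem crouzeix_kronecker_normal {n m : ℕ} (A : Matrix (Fin n) (Fin n) ℂ)
    (hA : CrouzeixIneq A) (N : Matrix (Fin m) (Fin m) ℂ)
    (hN : N.conjTranspose * N = N * N.conjTranspose) :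
    CrouzeixIneq (Matrix.kroneckerMap (· * ·) N A) ∧
      CrouzeixIneq (Matrix.kroneckerMap (· * ·) A N) := by
  have hAN := hA.kronecker_of_isStarNormal ⟨hN⟩
  refine ⟨?_, hAN⟩
  rw [← reindex_prodComm_kronecker]
  exact hAN.reindex _
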